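/- arXiv:1702.05420 — 6 statements merged into one kernel-verified Lean document; each statement's English description precedes it below -/
import Mathlib

section
/- Fix a robot index i with a finite neighbor set N. For each j ∈ N let a_{ij} ≥ 0, b_{ij} ∈ ℝ, and let r^q_{ij}, r^ξ_{ij} : ℝ → ℝ² be given signals. Suppose q_i, ξ_i : ℝ → ℝ² are differentiable and satisfy the cooperative dynamics with zero human input: ξ̇_i(t) = Σ_{j∈N} b_{ij}(r^q_{ij}(t) − q_i(t)) and q̇_i(t) = Σ_{j∈N} a_{ij}(r^q_{ij}(t) − q_i(t)) − Σ_{j∈N} b_{ij}(r^ξ_{ij}(t) − ξ_i(t)). Define the storage function S_i(t) = ½‖q_i(t)‖² + ½‖ξ_i(t)‖², and for each j ∈ N the signals r_{ij}(t) = (r^q_{ij}(t), r^ξ_{ij}(t)) ∈ ℝ²×ℝ² and p_{ij}(t) = M_{ij}(r_{ij}(t) − (q_i(t), ξ_i(t))), where M_{ij}(x₁,x₂) = (a_{ij}x₁ − b_{ij}x₂, b_{ij}x₁). Then for every t, the derivative of S_i satisfies S_i'(t) = −Σ_{j∈N} a_{ij}‖q_i(t) − r^q_{ij}(t)‖² +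 Σ_{j∈N} ⟨r_{ij}(t), p_{ij}(t)⟩, and hence S_i'(t) ≤ Σ_{j∈N} ⟨r_{ij}(t), p_{ij}(t)⟩; i.e., the robot dynamics is passive from the received signals r_{ij} to the variables p_{ij}. -/
open RealInnerProductSpace

/-! The derivative of the storage is `⟪(q, ξ), M (r - (q, ξ))⟫`. Replacing `(q, ξ)` by `r`
costs `⟪r - (q, ξ), M (r - (q, ξ))⟫`, in which the `b`-part of `M` is skew-symmetric and drops
out, leaving `a ‖r^q - q‖² ≥ 0`. -/

section Passivity

variable {E : Type*} [NormedAddCommGroup E] [InnerProductSpace ℝ E]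

theorem hasDerivAt_half_norm_sq_add_half_norm_sq {f g : ℝ → E} {f' g' : E} {t : ℝ}
    (hf : HasDerivAt f f' t) (hg : HasDerivAt g g' t) :
    HasDerivAt (fun s => 1 / 2 * ‖f s‖ ^ 2 + 1 / 2 * ‖g s‖ ^ 2)
      (⟪f t, f'⟫ + ⟪g t, g'⟫) t :=
  ((hf.norm_sq.const_mul (1 / 2)).add (hg.norm_sq.const_mul (1 / 2))).congr_deriv (by ring)

theorem inner_coupling_eq_neg_dissipation_add_supply (a b : ℝ) (q ξ rq rξ : E) :
    ⟪q, a • (rq - q) - b • (rξ - ξ)⟫ + ⟪ξ, b • (rq - q)⟫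
      = -(a * ‖q - rq‖ ^ 2)
        + (⟪rq, a • (rq - q) - b • (rξ - ξ)⟫ + ⟪rξ, b • (rq - q)⟫) := by
  simp only [inner_sub_right, real_inner_smul_right,
    norm_sub_sq_real, real_inner_self_eq_norm_sq]
  linear_combination (-a) * real_inner_comm rq q
    - b * (real_inner_comm rξ q + real_inner_comm q ξ + real_inner_comm ξ rq
      + real_inner_comm rq rξ)

theorem inner_sum_coupling_eq_neg_dissipation_add_supply {ι : Type*} (N : Finset ι)
    (a b : ι → ℝ) (q ξ : E) (rq rξ : ι → E) :
    ⟪q, ∑ j ∈ N, a j • (rq j - q) - ∑ j ∈ N, b j • (rξ j - ξ)⟫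
        + ⟪ξ, ∑ j ∈ N, b j • (rq j - q)⟫
      = -∑ j ∈ N, a j * ‖q - rq j‖ ^ 2
        + ∑ j ∈ N, (⟪rq j, a j • (rq j - q) - b j • (rξ j - ξ)⟫
          + ⟪rξ j, b j • (rq j - q)⟫) := by
  rw [← Finset.sum_sub_distrib, inner_sum, inner_sum, ← Finset.sum_add_distrib,
    ← Finset.sum_neg_distrib, ← Finset.sum_add_distrib]
  exact Finset.sum_congr rfl fun j _ =>
    inner_coupling_eq_neg_dissipation_add_supply (a j) (b j) q ξ (rq j) (rξ j)

end Passivity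

/-- Passivity of a single robot's dynamics (zero human input):
with `ξ̇ᵢ = Σⱼ bᵢⱼ(r^q_{ij} − qᵢ)` and `q̇ᵢ = Σⱼ aᵢⱼ(r^q_{ij} − qᵢ) − Σⱼ bᵢⱼ(r^ξ_{ij} − ξᵢ)`,
the storage `Sᵢ = ½‖qᵢ‖² + ½‖ξᵢ‖²` satisfies
`Sᵢ' = −Σⱼ aᵢⱼ‖qᵢ − r^q_{ij}‖² + Σⱼ ⟨r_{ij}, p_{ij}⟩ ≤ Σⱼ ⟨r_{ij}, p_{ij}⟩`,
where `p_{ij} = M_{ij}(r_{ij} − (qᵢ, ξᵢ))`, `M_{ij}(x₁,x₂) = (aᵢⱼx₁ − bᵢⱼx₂, bᵢⱼx₁)`,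
and the product inner product is taken componentwise. -/
theorem stmt_2 {ι : Type*} (N : Finset ι) (a b : ι → ℝ)
    (ha : ∀ j ∈ N, 0 ≤ a j)
    (rq rξ : ι → ℝ → EuclideanSpace ℝ (Fin 2))
    (qi ξi : ℝ → EuclideanSpace ℝ (Fin 2))
    (hξ : ∀ t, HasDerivAt ξi (∑ j ∈ N, b j • (rq j t - qi t)) t)
    (hq : ∀ t, HasDerivAt qi
      (∑ j ∈ N, a j • (rq j t - qi t) - ∑ j ∈ N, b j • (rξ j t - ξi t)) t)
    (M : ι → EuclideanSpace ℝ (Fin 2) × EuclideanSpace ℝ (Fin 2) →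
         EuclideanSpace ℝ (Fin 2) × EuclideanSpace ℝ (Fin 2))
    (hM : ∀ j (x : EuclideanSpace ℝ (Fin 2) × EuclideanSpace ℝ (Fin 2)),
      M j x = (a j • x.1 - b j • x.2, b j • x.1))
    (p : ι → ℝ → EuclideanSpace ℝ (Fin 2) × EuclideanSpace ℝ (Fin 2))
    (hp : ∀ j t, p j t = M j ((rq j t, rξ j t) - (qi t, ξi t)))
    (S : ℝ → ℝ)
    (hS : ∀ t, S t = 1 / 2 * ‖qi t‖ ^ 2 + 1 / 2 * ‖ξi t‖ ^ 2) :
    ∀ t, HasDerivAt S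
        (-∑ j ∈ N, a j * ‖qi t - rq j t‖ ^ 2
          + ∑ j ∈ N, (⟪rq j t, (p j t).1⟫ + ⟪rξ j t, (p j t).2⟫)) t ∧
      -∑ j ∈ N, a j * ‖qi t - rq j t‖ ^ 2
          + ∑ j ∈ N, (⟪rq j t, (p j t).1⟫ + ⟪rξ j t, (p j t).2⟫)
        ≤ ∑ j ∈ N, (⟪rq j t, (p j t).1⟫ + ⟪rξ j t, (p j t).2⟫) := by
  intro t
  have hp_eq : ∀ j, p j t = (a j • (rq j t - qi t) - b j • (rξ j t - ξi t),
      b j • (rq j t - qi t)) := fun j => by simp [hp, hM]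
  have hS_eq : S = fun s => 1 / 2 * ‖qi s‖ ^ 2 + 1 / 2 * ‖ξi s‖ ^ 2 := funext hS
  have hdissipation : 0 ≤ ∑ j ∈ N, a j * ‖qi t - rq j t‖ ^ 2 :=
    Finset.sum_nonneg fun j hj => mul_nonneg (ha j hj) (sq_nonneg _)
  simp only [hp_eq]
  refine ⟨?_, by linarith⟩
  rw [hS_eq, ← inner_sum_coupling_eq_neg_dissipation_add_supply]
  exact hasDerivAt_half_norm_sq_add_half_norm_sq (hq t) (hξ t)
end

section
/- Consider n robots indexed by i ∈ Fin n with differentiable positions q_i : ℝ → ℝ² and controller states ξ_i : ℝ → ℝ². Let a, b : Fin n → Fin n → ℝ be symmetric weights (a_{ij} = a_{ji}, b_{ij} = b_{ji}) with a_{ij} ≥ 0 for all i, j. Let V_h ⊆ Fin n be a nonempty subset with m = |V_h| elements, let δ_i = 1 if i ∈ V_h and 0 otherwise, let u_h : ℝ → ℝ² be a given input, and let q_r ∈ ℝ² be a constant. Suppose the delay-free dynamics hold: ξ̇_i(t) = Σ_j b_{ij}(q_j(t) − q_i(t)) and q̇_i(t) = Σ_j a_{ij}(q_j(t) − q_i(t))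 − Σ_j b_{ij}(ξ_j(t) − ξ_i(t)) + δ_i u_h(t). Define S(t) = (1/(2m)) Σ_i (‖q_i(t) − q_r‖² + ‖ξ_i(t)‖²) and z̄(t) = (1/m) Σ_{i∈V_h} q_i(t) − q_r. Then S'(t) = −(1/(2m)) Σ_i Σ_j a_{ij} ‖q_i(t) − q_j(t)‖² + ⟨z̄(t), u_h(t)⟩, and hence S'(t) ≤ ⟨z̄(t), u_h(t)⟩; i.e., the delay-free robotic network is passive from the human input u_h to the (shifted) average position z̄ of the accessible robots. -/
/-!
Differentiating the storage produces, robot by robot, inner products of the states with weighted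
Laplacians `∑ⱼ wᵢⱼ (yⱼ - yᵢ)`. For symmetric weights, summation by parts turns
`∑ᵢ ⟪xᵢ, ∑ⱼ wᵢⱼ (yⱼ - yᵢ)⟫` into `-½ ∑ᵢⱼ wᵢⱼ ⟪xᵢ - xⱼ, yᵢ - yⱼ⟫`. Hence the two `b`-couplings
(position into controller and back) cancel exactly, the `a`-coupling leaves the nonpositive
dissipation `-½ ∑ᵢⱼ aᵢⱼ ‖qᵢ - qⱼ‖²`, and the human input contributes `m ⟪z̄, u_h⟫`.
-/

open RealInnerProductSpace Finset

section

variable {ι E : Type*} [NormedAddCommGroup E] [InnerProductSpace ℝ E]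

lemma card_mul_inner_average_sub {s : Finset ι} (hs : s.Nonempty) (x : ι → E) (r u : E) :
    (#s : ℝ) * ⟪(1 / (#s : ℝ)) • ∑ i ∈ s, x i - r, u⟫ = ∑ i ∈ s, ⟪x i - r, u⟫ := by
  have hcard : (#s : ℝ) ≠ 0 := by exact_mod_cast hs.card_pos.ne'
  simp only [inner_sub_left, real_inner_smul_left, sum_inner, sum_sub_distrib, sum_const,
    nsmul_eq_mul]
  field_simp

variable [Fintype ι]

lemma sum_sum_mul_swap_of_symm {w : ι → ι → ℝ} (hw : ∀ i j, w i j = w j i) (f : ι → ι → ℝ) :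
    ∑ i, ∑ j, w i j * f i j = ∑ i, ∑ j, w i j * f j i := by
  rw [sum_comm]
  simp only [hw]

lemma sum_inner_laplacian_of_symm {w : ι → ι → ℝ} (hw : ∀ i j, w i j = w j i) (x y : ι → E) :
    ∑ i, ⟪x i, ∑ j, w i j • (y j - y i)⟫
      = -(1 / 2) * ∑ i, ∑ j, w i j * ⟪x i - x j, y i - y j⟫ := by
  have hswap := sum_sum_mul_swap_of_symm hw fun i j => ⟪x i, y j - y i⟫
  have hpair : ∀ i j, ⟪x i, y j - y i⟫ + ⟪x j, y i - y j⟫ = -⟪x i - x j, y i - y j⟫ := by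
    intro i j
    simp only [inner_sub_left, inner_sub_right]
    ring
  simp only [inner_sum, real_inner_smul_right] at hswap ⊢
  have htwice : 2 * ∑ i, ∑ j, w i j * ⟪x i, y j - y i⟫
      = -∑ i, ∑ j, w i j * ⟪x i - x j, y i - y j⟫ := by
    simp only [two_mul]
    nth_rewrite 2 [hswap]
    simp only [← sum_add_distrib, ← sum_neg_distrib, ← mul_add, hpair, mul_neg]
  linarith

lemma network_energy_rate {a b : ι → ι → ℝ} (ha : ∀ i j, a i j = a j i)
    (hb : ∀ i j, b i j = b j i) (q ξ d : ι → E) (r : E) :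
    ∑ i, (2 * ⟪q i - r, ∑ j, a i j • (q j - q i) - ∑ j, b i j • (ξ j - ξ i) + d i⟫
        + 2 * ⟪ξ i, ∑ j, b i j • (q j - q i)⟫)
      = -∑ i, ∑ j, a i j * ‖q i - q j‖ ^ 2 + 2 * ∑ i, ⟪q i - r, d i⟫ := by
  have hq := sum_inner_laplacian_of_symm ha (fun i => q i - r) q
  have hqξ := sum_inner_laplacian_of_symm hb (fun i => q i - r) ξ
  have hξq := sum_inner_laplacian_of_symm hb ξ q
  simp only [sub_sub_sub_cancel_right, real_inner_self_eq_norm_sq] at hq hqξ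
  simp only [real_inner_comm (q _ - q _)] at hξq
  simp only [inner_add_right, inner_sub_right, sum_add_distrib, sum_sub_distrib, ← mul_sum]
  rw [hq, hqξ, hξq]
  ring

end

/-- Passivity of the delay-free robotic network: under the dynamics
`ξ̇ᵢ = Σⱼ bᵢⱼ(qⱼ − qᵢ)`, `q̇ᵢ = Σⱼ aᵢⱼ(qⱼ − qᵢ) − Σⱼ bᵢⱼ(ξⱼ − ξᵢ) + δᵢ u_h`, with
symmetric gains (`aᵢⱼ ≥ 0`), the storage `S = (1/(2m)) Σᵢ (‖qᵢ − q_r‖² + ‖ξᵢ‖²)`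
satisfies `S' = −(1/(2m)) Σᵢ Σⱼ aᵢⱼ‖qᵢ − qⱼ‖² + ⟨z̄, u_h⟩ ≤ ⟨z̄, u_h⟩`,
where `z̄ = (1/m) Σ_{i ∈ V_h} qᵢ − q_r`. -/
theorem stmt_3 {n : ℕ} (a b : Fin n → Fin n → ℝ)
    (hsym_a : ∀ i j, a i j = a j i) (hsym_b : ∀ i j, b i j = b j i)
    (ha : ∀ i j, 0 ≤ a i j)
    (Vh : Finset (Fin n)) (hVh : Vh.Nonempty) (m : ℕ) (hm : m = Vh.card)
    (δ : Fin n → ℝ) (hδ : ∀ i, δ i = if i ∈ Vh then 1 else 0)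
    (uh : ℝ → EuclideanSpace ℝ (Fin 2)) (qr : EuclideanSpace ℝ (Fin 2))
    (q ξ : Fin n → ℝ → EuclideanSpace ℝ (Fin 2))
    (hξ : ∀ i t, HasDerivAt (ξ i) (∑ j, b i j • (q j t - q i t)) t)
    (hq : ∀ i t, HasDerivAt (q i)
      (∑ j, a i j • (q j t - q i t) - ∑ j, b i j • (ξ j t - ξ i t) + δ i • uh t) t)
    (S : ℝ → ℝ)
    (hS : ∀ t, S t = (1 / (2 * (m : ℝ))) * ∑ i, (‖q i t - qr‖ ^ 2 + ‖ξ i t‖ ^ 2))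
    (zbar : ℝ → EuclideanSpace ℝ (Fin 2))
    (hz : ∀ t, zbar t = (1 / (m : ℝ)) • ∑ i ∈ Vh, q i t - qr) :
    ∀ t, HasDerivAt S
        (-(1 / (2 * (m : ℝ))) * ∑ i, ∑ j, a i j * ‖q i t - q j t‖ ^ 2
          + ⟪zbar t, uh t⟫) t ∧
      -(1 / (2 * (m : ℝ))) * ∑ i, ∑ j, a i j * ‖q i t - q j t‖ ^ 2 + ⟪zbar t, uh t⟫
        ≤ ⟪zbar t, uh t⟫ := by
  intro t
  have hdissipation : 0 ≤ 1 / (2 * (m : ℝ)) * ∑ i, ∑ j, a i j * ‖q i t - q j t‖ ^ 2 :=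
    mul_nonneg (by positivity) <|
      sum_nonneg fun i _ => sum_nonneg fun j _ => mul_nonneg (ha i j) (sq_nonneg _)
  refine ⟨?_, by linarith⟩
  have hm0 : (m : ℝ) ≠ 0 := by rw [hm]; exact_mod_cast hVh.card_pos.ne'
  have hinput : ∑ i, ⟪q i t - qr, δ i • uh t⟫ = m * ⟪zbar t, uh t⟫ := by
    simp only [hδ, ite_smul, one_smul, zero_smul, apply_ite (inner ℝ _), inner_zero_right,
      sum_ite_mem, univ_inter]
    rw [hz, hm, card_mul_inner_average_sub hVh]
  rw [funext hS]
  refine ((HasDerivAt.fun_sum fun i _ => ((hq i t).sub_const qr).norm_sq.add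
    (hξ i t).norm_sq).const_mul (1 / (2 * (m : ℝ)))).congr_deriv ?_
  rw [network_energy_rate hsym_a hsym_b, hinput]
  field_simp
end

section
/- Let σ > 0 and T > 0. Let p_{ij}, p_{ji}, r̄_{ij}, r̄_{ji} : ℝ → ℝ⁴ be continuous functions, and define the scattering variables s⁺_{ij}(t) = (1/√(2σ))(−p_{ij}(t) + σ r̄_{ij}(t)), s⁻_{ij}(t) = (1/√(2σ))(−p_{ij}(t) − σ r̄_{ij}(t)), s⁺_{ji}(t) = (1/√(2σ))(p_{ji}(t) + σ r̄_{ji}(t)), s⁻_{ji}(t) = (1/√(2σ))(p_{ji}(t) − σ r̄_{ji}(t)). Assume the transmission relations s⁺_{ji}(t) = s⁺_{ij}(t − T) and s⁻_{ij}(t) = s⁻_{ji}(t − T) hold for all t. Define the channel storage S^c(t) = ½∫_{t−T}^{t} ‖s⁺_{ij}(τ)‖² dτ + ½∫_{t−T}^{t} ‖s⁻_{ji}(τ)‖² dτ. Then S^c is differentiable and (S^c)'(t) = −⟨p_{ij}(t), r̄_{ij}(t)⟩ − ⟨p_{ji}(t), r̄_{ji}(t)⟩ for all t; i.e., the delayed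 communication channel is passive from (−p_{ij}, −p_{ji}) to (r̄_{ij}, r̄_{ji}). -/
open RealInnerProductSpace

/-!
The storage of the channel is the energy of the scattering waves in transit, a sliding-window
integral, so its derivative is the power entering the channel minus the power leaving it. The
transmission relations turn the leaving power into the squared norms of the received waves, and
the scattering transformation is designed so that the difference of the squared norms of the two
waves at one end is twice the power ⟨p, r̄⟩ exchanged there.
-/

theorem Continuous.hasDerivAt_integral_sliding_window {E : Type*} [NormedAddCommGroup E]
    [NormedSpace ℝ E] [CompleteSpace E] {f : ℝ → E} (hf : Continuous f) (T t : ℝ) :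
    HasDerivAt (fun u => ∫ τ in (u - T)..u, f τ) (f t - f (t - T)) t := by
  have hF : ∀ s, HasDerivAt (fun u => ∫ τ in (0 : ℝ)..u, f τ) (f s) s := fun s =>
    (hf.integral_hasStrictDerivAt 0 s).hasDerivAt
  have hwindow : (fun u => ∫ τ in (u - T)..u, f τ) =
      fun u => (∫ τ in (0 : ℝ)..u, f τ) - ∫ τ in (0 : ℝ)..(u - T), f τ := by
    funext u
    exact (intervalIntegral.integral_interval_sub_left
      (hf.intervalIntegrable _ _) (hf.intervalIntegrable _ _)).symm
  rw [hwindow]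
  exact (hF t).sub ((hF (t - T)).comp_sub_const t T)

theorem norm_sq_scattering_sub {E : Type*} [NormedAddCommGroup E] [InnerProductSpace ℝ E]
    {σ : ℝ} (hσ : 0 < σ) (x y : E) :
    ‖(1 / Real.sqrt (2 * σ)) • (x + σ • y)‖ ^ 2 - ‖(1 / Real.sqrt (2 * σ)) • (x - σ • y)‖ ^ 2
      = 2 * ⟪x, y⟫ := by
  have hscale : (1 / Real.sqrt (2 * σ)) ^ 2 = 1 / (2 * σ) := by
    rw [div_pow, one_pow, Real.sq_sqrt (by positivity)]
  rw [norm_smul, norm_smul, mul_pow, mul_pow, Real.norm_eq_abs, sq_abs, hscale,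
    norm_add_sq_real, norm_sub_sq_real, real_inner_smul_right]
  field_simp
  ring

theorem stmt_5_general (σ T : ℝ) (hσ : 0 < σ)
    (pij pji rij rji : ℝ → EuclideanSpace ℝ (Fin 4))
    (hpij : Continuous pij) (hpji : Continuous pji)
    (hrij : Continuous rij) (hrji : Continuous rji)
    (spij smij spji smji : ℝ → EuclideanSpace ℝ (Fin 4))
    (hspij : ∀ t, spij t = (1 / Real.sqrt (2 * σ)) • (-pij t + σ • rij t))
    (hsmij : ∀ t, smij t = (1 / Real.sqrt (2 * σ)) • (-pij t - σ • rij t))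
    (hspji : ∀ t, spji t = (1 / Real.sqrt (2 * σ)) • (pji t + σ • rji t))
    (hsmji : ∀ t, smji t = (1 / Real.sqrt (2 * σ)) • (pji t - σ • rji t))
    (htransp : ∀ t, spji t = spij (t - T))
    (htransm : ∀ t, smij t = smji (t - T))
    (Sc : ℝ → ℝ)
    (hSc : ∀ t, Sc t = 1 / 2 * (∫ τ in (t - T)..t, ‖spij τ‖ ^ 2)
                     + 1 / 2 * (∫ τ in (t - T)..t, ‖smji τ‖ ^ 2)) :
    ∀ t, HasDerivAt Sc (-⟪pij t, rij t⟫ - ⟪pji t, rji t⟫) t := by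
  intro t
  have hspij_cont : Continuous spij := funext hspij ▸ by fun_prop
  have hsmji_cont : Continuous smji := funext hsmji ▸ by fun_prop
  have hspij_sq_cont : Continuous fun τ => ‖spij τ‖ ^ 2 := by fun_prop
  have hsmji_sq_cont : Continuous fun τ => ‖smji τ‖ ^ 2 := by fun_prop
  have hderiv : HasDerivAt Sc (1 / 2 * (‖spij t‖ ^ 2 - ‖spji t‖ ^ 2)
      + 1 / 2 * (‖smji t‖ ^ 2 - ‖smij t‖ ^ 2)) t := by
    rw [funext hSc, htransp, htransm]
    exact ((hspij_sq_cont.hasDerivAt_integral_sliding_window T t).const_mul _).add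
      ((hsmji_sq_cont.hasDerivAt_integral_sliding_window T t).const_mul _)
  have hbalance_ij : ‖spij t‖ ^ 2 - ‖smij t‖ ^ 2 = -2 * ⟪pij t, rij t⟫ := by
    rw [hspij, hsmij, norm_sq_scattering_sub hσ, inner_neg_left]
    ring
  have hbalance_ji : ‖spji t‖ ^ 2 - ‖smji t‖ ^ 2 = 2 * ⟪pji t, rji t⟫ := by
    rw [hspji, hsmji, norm_sq_scattering_sub hσ]
  convert hderiv using 1
  linear_combination (-1 / 2 : ℝ) * hbalance_ij + (1 / 2 : ℝ) * hbalance_ji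

/-- Passivity of the delayed communication channel under the scattering
transformation: with scattering variables
`s⁺ᵢⱼ = (1/√(2σ))(−pᵢⱼ + σr̄ᵢⱼ)`, `s⁻ᵢⱼ = (1/√(2σ))(−pᵢⱼ − σr̄ᵢⱼ)`,
`s⁺ⱼᵢ = (1/√(2σ))(pⱼᵢ + σr̄ⱼᵢ)`, `s⁻ⱼᵢ = (1/√(2σ))(pⱼᵢ − σr̄ⱼᵢ)` and transmission
`s⁺ⱼᵢ(t) = s⁺ᵢⱼ(t − T)`, `s⁻ᵢⱼ(t) = s⁻ⱼᵢ(t − T)`, the channel storage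
`S^c(t) = ½∫_{t−T}^t ‖s⁺ᵢⱼ‖² + ½∫_{t−T}^t ‖s⁻ⱼᵢ‖²` is differentiable with
`(S^c)'(t) = −⟨pᵢⱼ(t), r̄ᵢⱼ(t)⟩ − ⟨pⱼᵢ(t), r̄ⱼᵢ(t)⟩`. -/
theorem stmt_5 (σ T : ℝ) (hσ : 0 < σ) (hT : 0 < T)
    (pij pji rij rji : ℝ → EuclideanSpace ℝ (Fin 4))
    (hpij : Continuous pij) (hpji : Continuous pji)
    (hrij : Continuous rij) (hrji : Continuous rji)
    (spij smij spji smji : ℝ → EuclideanSpace ℝ (Fin 4))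
    (hspij : ∀ t, spij t = (1 / Real.sqrt (2 * σ)) • (-pij t + σ • rij t))
    (hsmij : ∀ t, smij t = (1 / Real.sqrt (2 * σ)) • (-pij t - σ • rij t))
    (hspji : ∀ t, spji t = (1 / Real.sqrt (2 * σ)) • (pji t + σ • rji t))
    (hsmji : ∀ t, smji t = (1 / Real.sqrt (2 * σ)) • (pji t - σ • rji t))
    (htransp : ∀ t, spji t = spij (t - T))
    (htransm : ∀ t, smij t = smji (t - T))
    (Sc : ℝ → ℝ)
    (hSc : ∀ t, Sc t = 1 / 2 * (∫ τ in (t - T)..t, ‖spij τ‖ ^ 2)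
                     + 1 / 2 * (∫ τ in (t - T)..t, ‖smji τ‖ ^ 2)) :
    ∀ t, HasDerivAt Sc (-⟪pij t, rij t⟫ - ⟪pji t, rji t⟫) t :=
  stmt_5_general σ T hσ pij pji rij rji hpij hpji hrij hrji spij smij spji smji hspij hsmij hspji
    hsmji htransp htransm Sc hSc
end

section
/- Fix a robot index i with finite neighbor set N, gains a_{ij} ≥ 0, b_{ij} ∈ ℝ for j ∈ N, a constant reference q_r ∈ ℝ², a scalar δ_i ∈ {0,1}, an input u_h : ℝ → ℝ², and received signals r^q_{ij}, r^ξ_{ij} : ℝ → ℝ². Suppose q_i, ξ_i : ℝ → ℝ² are differentiable and satisfy ξ̇_i(t) = Σ_{j∈N} b_{ij}(r^q_{ij}(t) − q_i(t)) and q̇_i(t) = Σ_{j∈N} a_{ij}(r^q_{ij}(t) − q_i(t)) − Σ_{j∈N} b_{ij}(r^ξ_{ij}(t) − ξ_i(t)) + δ_i u_h(t). Define q̄_i = q_i − q_r, r̄^q_{ij} = r^q_{ij} − q_r, r̄_{ij} = (r̄^q_{ij}, r^ξ_{ij}), p_{ij} = M_{ij}((r^q_{ij}, r^ξ_{ij})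 − (q_i, ξ_i)) with M_{ij}(x₁,x₂) = (a_{ij}x₁ − b_{ij}x₂, b_{ij}x₁), and the error storage S̄_i(t) = ½‖q̄_i(t)‖² + ½‖ξ_i(t)‖². Then S̄_i'(t) = −Σ_{j∈N} a_{ij}‖q_i(t) − r^q_{ij}(t)‖² + Σ_{j∈N} ⟨r̄_{ij}(t), p_{ij}(t)⟩ + δ_i ⟨q̄_i(t), u_h(t)⟩ for all t. -/
open RealInnerProductSpace

/-!
The storage is half the squared norm of the error state `(qᵢ − q_r, ξᵢ)`, so its derivative is
the inner product of the error state with the right-hand side of the dynamics. For each neighbour,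
the error state equals `r̄ᵢⱼ − e` with `e = (r^q_{ij} − qᵢ, r^ξ_{ij} − ξᵢ)`, and `p_{ij} = M_{ij} e`.
The `b`-part of `M_{ij}` is skew, so `⟨e, M_{ij} e⟩ = aᵢⱼ‖r^q_{ij} − qᵢ‖²`, which gives the
dissipation term.
-/

section

variable {E : Type*} [NormedAddCommGroup E] [InnerProductSpace ℝ E]

theorem inner_gain_self (a b : ℝ) (e₁ e₂ : E) :
    ⟪e₁, a • e₁ - b • e₂⟫ + ⟪e₂, b • e₁⟫ = a * ‖e₁‖ ^ 2 := by
  rw [inner_sub_right, real_inner_smul_right, real_inner_smul_right, real_inner_smul_right,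
    real_inner_self_eq_norm_sq, real_inner_comm e₁ e₂]
  ring

theorem inner_error_gain (a b : ℝ) (q ξ rq rξ qr : E) :
    ⟪q - qr, a • (rq - q) - b • (rξ - ξ)⟫ + ⟪ξ, b • (rq - q)⟫
      = -(a * ‖q - rq‖ ^ 2)
        + (⟪rq - qr, a • (rq - q) - b • (rξ - ξ)⟫ + ⟪rξ, b • (rq - q)⟫) := by
  have hgain := inner_gain_self a b (rq - q) (rξ - ξ)
  rw [norm_sub_rev] at hgain
  calc _ = ⟪(rq - qr) - (rq - q), a • (rq - q) - b • (rξ - ξ)⟫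
          + ⟪rξ - (rξ - ξ), b • (rq - q)⟫ := by
        rw [sub_sub_sub_cancel_left, sub_sub_cancel]
    _ = _ := by
        rw [inner_sub_left (rq - qr), inner_sub_left rξ]
        linarith

theorem hasDerivAt_half_norm_sq_sub {f : ℝ → E} {f' : E} {t : ℝ} (hf : HasDerivAt f f' t)
    (c : E) : HasDerivAt (fun s => 1 / 2 * ‖f s - c‖ ^ 2) ⟪f t - c, f'⟫ t := by
  simpa using (hf.sub_const c).norm_sq.const_mul (1 / 2 : ℝ)

end

theorem stmt_6_general {ι : Type*} (N : Finset ι) (a b : ι → ℝ)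
    (qr : EuclideanSpace ℝ (Fin 2)) (δ : ℝ)
    (uh : ℝ → EuclideanSpace ℝ (Fin 2))
    (rq rξ : ι → ℝ → EuclideanSpace ℝ (Fin 2))
    (qi ξi : ℝ → EuclideanSpace ℝ (Fin 2))
    (hξ : ∀ t, HasDerivAt ξi (∑ j ∈ N, b j • (rq j t - qi t)) t)
    (hq : ∀ t, HasDerivAt qi
      (∑ j ∈ N, a j • (rq j t - qi t) - ∑ j ∈ N, b j • (rξ j t - ξi t) + δ • uh t) t)
    (M : ι → EuclideanSpace ℝ (Fin 2) × EuclideanSpace ℝ (Fin 2) →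
         EuclideanSpace ℝ (Fin 2) × EuclideanSpace ℝ (Fin 2))
    (hM : ∀ j (x : EuclideanSpace ℝ (Fin 2) × EuclideanSpace ℝ (Fin 2)),
      M j x = (a j • x.1 - b j • x.2, b j • x.1))
    (p : ι → ℝ → EuclideanSpace ℝ (Fin 2) × EuclideanSpace ℝ (Fin 2))
    (hp : ∀ j t, p j t = M j ((rq j t, rξ j t) - (qi t, ξi t)))
    (Sbar : ℝ → ℝ)
    (hS : ∀ t, Sbar t = 1 / 2 * ‖qi t - qr‖ ^ 2 + 1 / 2 * ‖ξi t‖ ^ 2) :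
    ∀ t, HasDerivAt Sbar
      (-∑ j ∈ N, a j * ‖qi t - rq j t‖ ^ 2
        + ∑ j ∈ N, (⟪rq j t - qr, (p j t).1⟫ + ⟪rξ j t, (p j t).2⟫)
        + δ * ⟪qi t - qr, uh t⟫) t := by
  intro t
  have hSbar : Sbar = fun s => 1 / 2 * ‖qi s - qr‖ ^ 2 + 1 / 2 * ‖ξi s - 0‖ ^ 2 := by
    funext s
    rw [hS, sub_zero]
  have hp₁ : ∀ j, (p j t).1 = a j • (rq j t - qi t) - b j • (rξ j t - ξi t) := by
    simp [hp, hM]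
  have hp₂ : ∀ j, (p j t).2 = b j • (rq j t - qi t) := by
    simp [hp, hM]
  rw [hSbar]
  refine ((hasDerivAt_half_norm_sq_sub (hq t) qr).add
    (hasDerivAt_half_norm_sq_sub (hξ t) 0)).congr_deriv ?_
  calc _ = ∑ j ∈ N, (⟪qi t - qr, a j • (rq j t - qi t) - b j • (rξ j t - ξi t)⟫
          + ⟪ξi t, b j • (rq j t - qi t)⟫) + δ * ⟪qi t - qr, uh t⟫ := by
        rw [sub_zero, ← Finset.sum_sub_distrib, inner_add_right, inner_sum, inner_sum,
          real_inner_smul_right, Finset.sum_add_distrib, add_right_comm]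
    _ = _ := by
        simp only [inner_error_gain, hp₁, hp₂, Finset.sum_add_distrib, Finset.sum_neg_distrib]

/-- Passivity of a single robot's error dynamics with human input:
with `ξ̇ᵢ = Σⱼ bᵢⱼ(r^q_{ij} − qᵢ)`,
`q̇ᵢ = Σⱼ aᵢⱼ(r^q_{ij} − qᵢ) − Σⱼ bᵢⱼ(r^ξ_{ij} − ξᵢ) + δᵢ u_h`, constant reference `q_r`,
error storage `S̄ᵢ = ½‖qᵢ − q_r‖² + ½‖ξᵢ‖²`, one has
`S̄ᵢ' = −Σⱼ aᵢⱼ‖qᵢ − r^q_{ij}‖² + Σⱼ ⟨r̄_{ij}, p_{ij}⟩ + δᵢ⟨q̄ᵢ, u_h⟩`,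
where `r̄_{ij} = (r^q_{ij} − q_r, r^ξ_{ij})`, `p_{ij} = M_{ij}((r^q_{ij},r^ξ_{ij}) − (qᵢ,ξᵢ))`
and `M_{ij}(x₁,x₂) = (aᵢⱼx₁ − bᵢⱼx₂, bᵢⱼx₁)`. -/
theorem stmt_6 {ι : Type*} (N : Finset ι) (a b : ι → ℝ)
    (ha : ∀ j ∈ N, 0 ≤ a j)
    (qr : EuclideanSpace ℝ (Fin 2)) (δ : ℝ) (hδ : δ = 0 ∨ δ = 1)
    (uh : ℝ → EuclideanSpace ℝ (Fin 2))
    (rq rξ : ι → ℝ → EuclideanSpace ℝ (Fin 2))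
    (qi ξi : ℝ → EuclideanSpace ℝ (Fin 2))
    (hξ : ∀ t, HasDerivAt ξi (∑ j ∈ N, b j • (rq j t - qi t)) t)
    (hq : ∀ t, HasDerivAt qi
      (∑ j ∈ N, a j • (rq j t - qi t) - ∑ j ∈ N, b j • (rξ j t - ξi t) + δ • uh t) t)
    (M : ι → EuclideanSpace ℝ (Fin 2) × EuclideanSpace ℝ (Fin 2) →
         EuclideanSpace ℝ (Fin 2) × EuclideanSpace ℝ (Fin 2))
    (hM : ∀ j (x : EuclideanSpace ℝ (Fin 2) × EuclideanSpace ℝ (Fin 2)),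
      M j x = (a j • x.1 - b j • x.2, b j • x.1))
    (p : ι → ℝ → EuclideanSpace ℝ (Fin 2) × EuclideanSpace ℝ (Fin 2))
    (hp : ∀ j t, p j t = M j ((rq j t, rξ j t) - (qi t, ξi t)))
    (Sbar : ℝ → ℝ)
    (hS : ∀ t, Sbar t = 1 / 2 * ‖qi t - qr‖ ^ 2 + 1 / 2 * ‖ξi t‖ ^ 2) :
    ∀ t, HasDerivAt Sbar
      (-∑ j ∈ N, a j * ‖qi t - rq j t‖ ^ 2
        + ∑ j ∈ N, (⟪rq j t - qr, (p j t).1⟫ + ⟪rξ j t, (p j t).2⟫)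
        + δ * ⟪qi t - qr, uh t⟫) t :=
  stmt_6_general N a b qr δ uh rq rξ qi ξi hξ hq M hM p hp Sbar hS
end

section
/- Under the hypotheses of the delayed-network passivity result (dynamics, scattering transmission relations, symmetric gains, total storage S, and z̄ = (1/m)Σ_{i∈V_h}q_i − q_r), assume additionally there exist ε > 0 and a differentiable function S_h : ℝ → ℝ with S_h(t) ≥ 0 for all t and S_h'(t) ≤ ⟨q_r − z(t), u_h(t)⟩ − ε‖q_r − z(t)‖² for all t (input strict passivity of the human decision process, where z(t) = (1/m)Σ_{i∈V_h}q_i(t)). Then the function U(t) = S(t) + S_h(t) is nonincreasing; in particular, for all t ≥ 0: S(t) ≤ S(0) + S_h(0), every ‖q_i(t) − q_r‖ and ‖ξ_i(t)‖ is bounded by √(2m(S(0)+S_h(0))), and ∫_0^t [(1/m) Σ_i Σ_j a_{ij}‖q_i(τ) − r^q_{ij}(τ)‖² + ε‖z̄(τ)‖²] dτ ≤ S(0) + S_h(0). -/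
/-!
Along solutions, each robot's error storage changes at the rate
`Σⱼ (⟪p_{ij}, r̄_{ij}⟫ − a_{ij}‖qᵢ − r^q_{ij}‖²) + δᵢ⟪qᵢ − q_r, u_h⟫`, while the scattering
relations make the energy in transit on an edge change at the rate
`−⟪p_{ij}, r̄_{ij}⟫ − ⟪p_{ji}, r̄_{ji}⟫`. The power pairings cancel, so
`S' = −(1/m)Σᵢⱼ a_{ij}‖qᵢ − r^q_{ij}‖² + ⟪z − q_r, u_h⟫`, and input strict passivity of the
human turns the last term into `−S_h' − ε‖z̄‖²`. Hence `U' ≤ −W ≤ 0`, where `W` is the integrand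
of the claimed bound; integrating gives the integral bound, and the norm bounds follow from
`‖qᵢ − q_r‖² + ‖ξᵢ‖² ≤ 2mS ≤ 2mU`.
-/

open Finset RealInnerProductSpace

theorem hasDerivAt_intervalIntegral_sub_const {E : Type*} [NormedAddCommGroup E]
    [NormedSpace ℝ E] [CompleteSpace E] {g : ℝ → E} (hg : Continuous g) (T t : ℝ) :
    HasDerivAt (fun s => ∫ τ in (s - T)..s, g τ) (g t - g (t - T)) t := by
  have hsplit : (fun s => ∫ τ in (s - T)..s, g τ)
      = fun s => (∫ τ in (0 : ℝ)..s, g τ) - ∫ τ in (0 : ℝ)..(s - T), g τ := by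
    funext s
    exact (intervalIntegral.integral_interval_sub_left (hg.intervalIntegrable _ _)
      (hg.intervalIntegrable _ _)).symm
  have hlower := (hg.integral_hasStrictDerivAt 0 (t - T)).hasDerivAt.comp_sub_const t T
  rw [hsplit]
  exact (hg.integral_hasStrictDerivAt 0 t).hasDerivAt.sub hlower

theorem antitone_and_integral_le_sub_of_hasDerivAt {U U' W : ℝ → ℝ}
    (hU : ∀ t, HasDerivAt U (U' t) t) (hW : Continuous W) (hW0 : ∀ t, 0 ≤ W t)
    (hUW : ∀ t, U' t ≤ -W t) :
    Antitone U ∧ ∀ t, 0 ≤ t → ∫ τ in (0 : ℝ)..t, W τ ≤ U 0 - U t := by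
  -- `U'` need not be integrable, so compare `U + ∫ W` instead of integrating `U' ≤ -W`.
  have hV : Antitone fun t => U t + ∫ τ in (0 : ℝ)..t, W τ :=
    antitone_of_hasDerivAt_nonpos
      (fun t => (hU t).add (hW.integral_hasStrictDerivAt 0 t).hasDerivAt)
      fun t => show U' t + W t ≤ 0 by linarith [hUW t]
  refine ⟨antitone_of_hasDerivAt_nonpos hU fun t => (hUW t).trans (neg_nonpos.2 (hW0 t)),
    fun t ht => ?_⟩
  have := hV ht
  simp only [intervalIntegral.integral_same, add_zero] at this
  linarith

theorem sum_add_swap_eq_sum_sum {V M : Type*} [Fintype V] [AddCommMonoid M]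
    (E : Finset (V × V)) (hE : ∀ e ∈ E, (e.2, e.1) ∉ E) (f : V → V → M)
    (hf : ∀ i j, (i, j) ∉ E → (j, i) ∉ E → f i j = 0) :
    ∑ e ∈ E, (f e.1 e.2 + f e.2 e.1) = ∑ i, ∑ j, f i j := by
  classical
  have hdisj : Disjoint E (E.image Prod.swap) := by
    refine disjoint_left.2 fun e he he' => ?_
    obtain ⟨e', he'E, rfl⟩ := mem_image.1 he'
    exact hE e' he'E he
  have hswap : ∑ e ∈ E, f e.2 e.1 = ∑ e ∈ E.image Prod.swap, f e.1 e.2 := by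
    rw [sum_image fun _ _ _ _ h => Prod.swap_injective h]; rfl
  rw [sum_add_distrib, hswap, ← sum_union hdisj, ← Fintype.sum_prod_type']
  refine sum_subset (subset_univ _) fun e _ he => hf _ _ (fun h => he (mem_union_left _ h)) ?_
  exact fun h => he (mem_union_right _ (mem_image.2 ⟨_, h, rfl⟩))

section

variable {F : Type*} [NormedAddCommGroup F]

/-- Squared ℓ² norm; Mathlib's norm on `F × F` is the sup norm. -/
def pairNormSq (x : F × F) : ℝ := ‖x.1‖ ^ 2 + ‖x.2‖ ^ 2

noncomputable def channelStorage (T : ℝ) (s : ℝ → F × F) (t : ℝ) : ℝ :=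
  1 / 2 * ∫ τ in (t - T)..t, pairNormSq (s τ)

theorem channelStorage_nonneg {T : ℝ} (hT : 0 ≤ T) (s : ℝ → F × F) (t : ℝ) :
    0 ≤ channelStorage T s t := by
  unfold channelStorage pairNormSq
  have := intervalIntegral.integral_nonneg (μ := MeasureTheory.volume) (by linarith : t - T ≤ t)
    fun τ _ => (by positivity : 0 ≤ ‖(s τ).1‖ ^ 2 + ‖(s τ).2‖ ^ 2)
  positivity

theorem hasDerivAt_channelStorage {s : ℝ → F × F} (hs : Continuous s) (T t : ℝ) :
    HasDerivAt (channelStorage T s) (1 / 2 * (pairNormSq (s t) - pairNormSq (s (t - T)))) t := by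
  have hs' : Continuous fun τ => pairNormSq (s τ) := by unfold pairNormSq; fun_prop
  exact (hasDerivAt_intervalIntegral_sub_const hs' T t).const_mul _

variable [InnerProductSpace ℝ F]

theorem HasDerivAt.half_norm_sq {f : ℝ → F} {f' : F} {t : ℝ} (hf : HasDerivAt f f' t) :
    HasDerivAt (fun s => 1 / 2 * ‖f s‖ ^ 2) ⟪f t, f'⟫ t :=
  (hf.norm_sq.const_mul (1 / 2 : ℝ)).congr_deriv (by ring)

theorem scattering_power_balance {σ : ℝ} (hσ : 0 < σ) (P Q R S : F) :
    1 / 2 * (‖(1 / √(2 * σ)) • (-P + σ • R)‖ ^ 2 - ‖(1 / √(2 * σ)) • (Q + σ • S)‖ ^ 2)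
      + 1 / 2 * (‖(1 / √(2 * σ)) • (Q - σ • S)‖ ^ 2 - ‖(1 / √(2 * σ)) • (-P - σ • R)‖ ^ 2)
      = -(⟪P, R⟫ + ⟪Q, S⟫) := by
  have hc : ‖1 / √(2 * σ)‖ ^ 2 = 1 / (2 * σ) := by
    rw [norm_div, norm_one, Real.norm_of_nonneg (Real.sqrt_nonneg _), div_pow, one_pow,
      Real.sq_sqrt (by positivity)]
  have hPR : -P - σ • R = -(P + σ • R) := by abel
  simp only [norm_smul, mul_pow, hc, hPR, norm_neg, neg_add_eq_sub, norm_sub_sq_real,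
    norm_add_sq_real, real_inner_smul_left, real_inner_smul_right, real_inner_comm R P]
  field_simp
  ring

def pairInner (x y : F × F) : ℝ := ⟪x.1, y.1⟫ + ⟪x.2, y.2⟫

theorem pairNormSq_scattering_power_balance {σ : ℝ} (hσ : 0 < σ) (P Q R S : F × F) :
    1 / 2 * (pairNormSq ((1 / √(2 * σ)) • (-P + σ • R))
        - pairNormSq ((1 / √(2 * σ)) • (Q + σ • S)))
      + 1 / 2 * (pairNormSq ((1 / √(2 * σ)) • (Q - σ • S))
        - pairNormSq ((1 / √(2 * σ)) • (-P - σ • R)))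
      = -(pairInner P R + pairInner Q S) := by
  have h₁ := scattering_power_balance hσ P.1 Q.1 R.1 S.1
  have h₂ := scattering_power_balance hσ P.2 Q.2 R.2 S.2
  simp only [pairNormSq, pairInner, Prod.smul_fst, Prod.smul_snd, Prod.fst_add, Prod.snd_add,
    Prod.fst_sub, Prod.snd_sub, Prod.fst_neg, Prod.snd_neg]
  linarith

/-- By `h₁`, `h₂`, what leaves one end of the channel at time `t - T` arrives at the other end at
time `t`, so only the power delivered by the two ends changes the energy in transit. -/
theorem hasDerivAt_channelStorage_add_channelStorage {σ T : ℝ} (hσ : 0 < σ)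
    {P Q R S : ℝ → F × F} (hP : Continuous P) (hQ : Continuous Q) (hR : Continuous R)
    (hS : Continuous S)
    (h₁ : ∀ t, (1 / √(2 * σ)) • (Q t + σ • S t)
      = (1 / √(2 * σ)) • (-P (t - T) + σ • R (t - T)))
    (h₂ : ∀ t, (1 / √(2 * σ)) • (-P t - σ • R t)
      = (1 / √(2 * σ)) • (Q (t - T) - σ • S (t - T)))
    (t : ℝ) :
    HasDerivAt (fun t => channelStorage T (fun τ => (1 / √(2 * σ)) • (-P τ + σ • R τ)) t
        + channelStorage T (fun τ => (1 / √(2 * σ)) • (Q τ - σ • S τ)) t)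
      (-(pairInner (P t) (R t) + pairInner (Q t) (S t))) t := by
  have h := (hasDerivAt_channelStorage (s := fun τ => (1 / √(2 * σ)) • (-P τ + σ • R τ))
    (by fun_prop) T t).add
    (hasDerivAt_channelStorage (s := fun τ => (1 / √(2 * σ)) • (Q τ - σ • S τ)) (by fun_prop) T t)
  rw [← h₁, ← h₂, pairNormSq_scattering_power_balance hσ] at h
  exact h

theorem inner_sub_add_inner_eq (a b : ℝ) (x y c rq rξ : F) :
    ⟪x - c, a • (rq - x) - b • (rξ - y)⟫ + ⟪y, b • (rq - x)⟫
      = ⟪a • (rq - x) - b • (rξ - y), rq - c⟫ + ⟪b • (rq - x), rξ⟫ - a * ‖x - rq‖ ^ 2 := by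
  simp only [inner_sub_left, inner_sub_right, real_inner_smul_left, real_inner_smul_right,
    norm_sub_sq_real, real_inner_self_eq_norm_sq, real_inner_comm c, real_inner_comm x y,
    real_inner_comm rq rξ]
  ring

/-- With `p_j = (a_j(rq_j − x) − b_j(rξ_j − y), b_j(rq_j − x))` and `r̄_j = (rq_j − c, rξ_j)`, the
summand on the right is `⟪p_j, r̄_j⟫ − a_j‖x − rq_j‖²`. -/
theorem inner_sub_sum_add_inner_sum_eq {ι : Type*} (s : Finset ι) (a b : ι → ℝ) (x y c u : F)
    (d : ℝ) (rq rξ : ι → F) :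
    ⟪x - c, ∑ j ∈ s, a j • (rq j - x) - ∑ j ∈ s, b j • (rξ j - y) + d • u⟫
        + ⟪y, ∑ j ∈ s, b j • (rq j - x)⟫
      = ∑ j ∈ s, (⟪a j • (rq j - x) - b j • (rξ j - y), rq j - c⟫ + ⟪b j • (rq j - x), rξ j⟫
          - a j * ‖x - rq j‖ ^ 2) + d * ⟪x - c, u⟫ := by
  rw [inner_add_right, real_inner_smul_right, ← sum_sub_distrib, inner_sum, inner_sum,
    add_right_comm, ← sum_add_distrib]
  simp only [inner_sub_add_inner_eq]

theorem inner_average_sub {ι : Type*} {s : Finset ι} (hs : s.Nonempty) (x : ι → F) (c u : F) :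
    ⟪(1 / (#s : ℝ)) • ∑ i ∈ s, x i - c, u⟫ = 1 / #s * ∑ i ∈ s, ⟪x i - c, u⟫ := by
  have hs' : (#s : ℝ) ≠ 0 := Nat.cast_ne_zero.2 hs.card_pos.ne'
  rw [← sum_inner, ← real_inner_smul_left, sum_sub_distrib, sum_const, smul_sub,
    ← Nat.cast_smul_eq_nsmul ℝ, smul_smul, one_div_mul_cancel hs', one_smul]

theorem antitone_and_integral_le_of_feedback {S Sh D : ℝ → ℝ} {y u : ℝ → F} {ε : ℝ}
    (hS : ∀ t, HasDerivAt S (-D t + ⟪y t, u t⟫) t) (hSh_diff : Differentiable ℝ Sh)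
    (hSh : ∀ t, deriv Sh t ≤ ⟪-y t, u t⟫ - ε * ‖-y t‖ ^ 2) (hD : Continuous D)
    (hy : Continuous y) (hD0 : ∀ t, 0 ≤ D t) (hε : 0 ≤ ε) :
    Antitone (fun t => S t + Sh t) ∧ ∀ t, 0 ≤ t →
      ∫ τ in (0 : ℝ)..t, (D τ + ε * ‖y τ‖ ^ 2) ≤ S 0 + Sh 0 - (S t + Sh t) := by
  refine antitone_and_integral_le_sub_of_hasDerivAt
    (fun t => (hS t).add (hSh_diff t).hasDerivAt) (by fun_prop)
    (fun t => add_nonneg (hD0 t) (by positivity)) fun t => ?_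
  have h := hSh t
  rw [inner_neg_left, norm_neg] at h
  linarith

end

section

variable {ι F : Type*} [Fintype ι] [NormedAddCommGroup F] [InnerProductSpace ℝ F]

/-- The storage `S` of the paper; `e = (i, j) ∈ E` carries the waves
`(−p_{ij} + σ r̄_{ij})/√(2σ)` from `i` to `j` and `(p_{ji} − σ r̄_{ji})/√(2σ)` from `j` to `i`. -/
noncomputable def totalStorage (m : ℕ) (T σ : ℝ) (qr : F) (q ξ : ι → ℝ → F)
    (p rbar : ι → ι → ℝ → F × F) (E : Finset (ι × ι)) (t : ℝ) : ℝ :=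
  1 / (m : ℝ) * ∑ i, (1 / 2 * ‖q i t - qr‖ ^ 2 + 1 / 2 * ‖ξ i t‖ ^ 2)
    + 1 / (m : ℝ) * ∑ e ∈ E,
      (channelStorage T (fun τ => (1 / √(2 * σ)) • (-p e.1 e.2 τ + σ • rbar e.1 e.2 τ)) t
        + channelStorage T (fun τ => (1 / √(2 * σ)) • (p e.2 e.1 τ - σ • rbar e.2 e.1 τ)) t)

theorem norm_sq_add_norm_sq_le_totalStorage {m : ℕ} (hm : 0 < m) {T : ℝ} (hT : 0 ≤ T)
    (σ : ℝ) (qr : F) (q ξ : ι → ℝ → F) (p rbar : ι → ι → ℝ → F × F) (E : Finset (ι × ι))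
    (i : ι) (t : ℝ) :
    ‖q i t - qr‖ ^ 2 + ‖ξ i t‖ ^ 2 ≤ 2 * m * totalStorage m T σ qr q ξ p rbar E t := by
  have hscale : ∀ R C : ℝ, 2 * m * (1 / (m : ℝ) * R + 1 / (m : ℝ) * C) = 2 * R + 2 * C := by
    intro R C
    field_simp
  rw [totalStorage, hscale]
  refine le_add_of_le_of_nonneg ?_ (mul_nonneg zero_le_two (sum_nonneg fun e _ =>
    add_nonneg (channelStorage_nonneg hT _ t) (channelStorage_nonneg hT _ t)))
  calc ‖q i t - qr‖ ^ 2 + ‖ξ i t‖ ^ 2 = 2 * (1 / 2 * ‖q i t - qr‖ ^ 2 + 1 / 2 * ‖ξ i t‖ ^ 2) := by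
        ring
    _ ≤ _ := mul_le_mul_of_nonneg_left
        (single_le_sum (f := fun j => 1 / 2 * ‖q j t - qr‖ ^ 2 + 1 / 2 * ‖ξ j t‖ ^ 2)
          (fun j _ => by positivity) (mem_univ i)) zero_le_two

theorem totalStorage_nonneg (m : ℕ) {T : ℝ} (hT : 0 ≤ T) (σ : ℝ) (qr : F) (q ξ : ι → ℝ → F)
    (p rbar : ι → ι → ℝ → F × F) (E : Finset (ι × ι)) (t : ℝ) :
    0 ≤ totalStorage m T σ qr q ξ p rbar E t :=
  add_nonneg (mul_nonneg (by positivity) (sum_nonneg fun i _ => by positivity))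
    (mul_nonneg (by positivity) (sum_nonneg fun e _ =>
      add_nonneg (channelStorage_nonneg hT _ t) (channelStorage_nonneg hT _ t)))

theorem hasDerivAt_totalStorage [DecidableEq ι] (a b : ι → ι → ℝ) {E : Finset (ι × ι)}
    (hE : ∀ e ∈ E, (e.2, e.1) ∉ E)
    (hoff : ∀ i j, (i, j) ∉ E → (j, i) ∉ E → a i j = 0 ∧ b i j = 0)
    (T : ℝ) {σ : ℝ} (hσ : 0 < σ) (qr : F) {Vh : Finset ι} (hVh : Vh.Nonempty)
    (δ : ι → ℝ) (hδ : ∀ i, δ i = if i ∈ Vh then 1 else 0) (uh : ℝ → F)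
    {rq rξ : ι → ι → ℝ → F} (hrq : ∀ i j, Continuous (rq i j))
    (hrξ : ∀ i j, Continuous (rξ i j)) {q ξ : ι → ℝ → F}
    (hξdyn : ∀ i t, HasDerivAt (ξ i) (∑ j, b i j • (rq i j t - q i t)) t)
    (hqdyn : ∀ i t, HasDerivAt (q i)
      (∑ j, a i j • (rq i j t - q i t) - ∑ j, b i j • (rξ i j t - ξ i t) + δ i • uh t) t)
    {p : ι → ι → ℝ → F × F}
    (hp : ∀ i j t, p i j t
      = (a i j • (rq i j t - q i t) - b i j • (rξ i j t - ξ i t), b i j • (rq i j t - q i t)))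
    {rbar : ι → ι → ℝ → F × F} (hrbar : ∀ i j t, rbar i j t = (rq i j t - qr, rξ i j t))
    (htrans1 : ∀ e ∈ E, ∀ t, (1 / √(2 * σ)) • (p e.2 e.1 t + σ • rbar e.2 e.1 t)
      = (1 / √(2 * σ)) • (-p e.1 e.2 (t - T) + σ • rbar e.1 e.2 (t - T)))
    (htrans2 : ∀ e ∈ E, ∀ t, (1 / √(2 * σ)) • (-p e.1 e.2 t - σ • rbar e.1 e.2 t)
      = (1 / √(2 * σ)) • (p e.2 e.1 (t - T) - σ • rbar e.2 e.1 (t - T)))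
    (t : ℝ) :
    HasDerivAt (totalStorage #Vh T σ qr q ξ p rbar E)
      (-(1 / (#Vh : ℝ) * ∑ i, ∑ j, a i j * ‖q i t - rq i j t‖ ^ 2)
        + ⟪(1 / (#Vh : ℝ)) • ∑ i ∈ Vh, q i t - qr, uh t⟫) t := by
  have hqc : ∀ i, Continuous (q i) := fun i =>
    continuous_iff_continuousAt.2 fun t => (hqdyn i t).continuousAt
  have hξc : ∀ i, Continuous (ξ i) := fun i =>
    continuous_iff_continuousAt.2 fun t => (hξdyn i t).continuousAt
  have hpc : ∀ i j, Continuous (p i j) := fun i j => by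
    rw [show p i j = _ from funext (hp i j)]; fun_prop
  have hrbarc : ∀ i j, Continuous (rbar i j) := fun i j => by
    rw [show rbar i j = _ from funext (hrbar i j)]; fun_prop
  have hrobot := (HasDerivAt.fun_sum (u := univ) fun i _ =>
    ((hqdyn i t).sub_const qr).half_norm_sq.add (hξdyn i t).half_norm_sq).const_mul
      (1 / (#Vh : ℝ))
  have hchannel := (HasDerivAt.fun_sum (u := E) fun e he =>
    hasDerivAt_channelStorage_add_channelStorage hσ (hpc e.1 e.2) (hpc e.2 e.1) (hrbarc e.1 e.2)
      (hrbarc e.2 e.1) (htrans1 e he) (htrans2 e he) t).const_mul (1 / (#Vh : ℝ))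
  have hpower : ∀ i, ⟪q i t - qr, ∑ j, a i j • (rq i j t - q i t)
        - ∑ j, b i j • (rξ i j t - ξ i t) + δ i • uh t⟫
        + ⟪ξ i t, ∑ j, b i j • (rq i j t - q i t)⟫
      = ∑ j, (pairInner (p i j t) (rbar i j t) - a i j * ‖q i t - rq i j t‖ ^ 2)
        + δ i * ⟪q i t - qr, uh t⟫ := fun i => by
    simp only [hp, hrbar]
    exact inner_sub_sum_add_inner_sum_eq _ _ _ _ _ _ _ _ _ _
  have hedges : ∑ e ∈ E, -(pairInner (p e.1 e.2 t) (rbar e.1 e.2 t)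
        + pairInner (p e.2 e.1 t) (rbar e.2 e.1 t))
      = -∑ i, ∑ j, pairInner (p i j t) (rbar i j t) := by
    rw [sum_neg_distrib,
      sum_add_swap_eq_sum_sum E hE fun i j => pairInner (p i j t) (rbar i j t)]
    intro i j h₁ h₂
    obtain ⟨ha, hb⟩ := hoff i j h₁ h₂
    simp [pairInner, hp, ha, hb]
  have hhuman : ∑ i, δ i * ⟪q i t - qr, uh t⟫ = ∑ i ∈ Vh, ⟪q i t - qr, uh t⟫ := by
    simp only [hδ, ite_mul, one_mul, zero_mul, sum_ite_mem, univ_inter]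
  refine (hrobot.add hchannel).congr_deriv ?_
  rw [sum_congr rfl fun i _ => hpower i, hedges, sum_add_distrib, hhuman, inner_average_sub hVh]
  simp only [sum_sub_distrib]
  ring

end

theorem stmt_8_general {n : ℕ} (G : SimpleGraph (Fin n))
    (a b : Fin n → Fin n → ℝ)
    (ha : ∀ i j, 0 ≤ a i j)
    (hoff : ∀ i j, ¬G.Adj i j → a i j = 0 ∧ b i j = 0)
    (T σ : ℝ) (hT : 0 < T) (hσ : 0 < σ)
    (qr : EuclideanSpace ℝ (Fin 2))
    (Vh : Finset (Fin n)) (hVh : Vh.Nonempty) (m : ℕ) (hm : m = Vh.card)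
    (δ : Fin n → ℝ) (hδ : ∀ i, δ i = if i ∈ Vh then 1 else 0)
    (uh : ℝ → EuclideanSpace ℝ (Fin 2))
    (rq rξ : Fin n → Fin n → ℝ → EuclideanSpace ℝ (Fin 2))
    (hrq : ∀ i j, Continuous (rq i j)) (hrξ : ∀ i j, Continuous (rξ i j))
    (q ξ : Fin n → ℝ → EuclideanSpace ℝ (Fin 2))
    -- the delayed cooperative dynamics
    (hξdyn : ∀ i t, HasDerivAt (ξ i) (∑ j, b i j • (rq i j t - q i t)) t)
    (hqdyn : ∀ i t, HasDerivAt (q i)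
      (∑ j, a i j • (rq i j t - q i t) - ∑ j, b i j • (rξ i j t - ξ i t) + δ i • uh t) t)
    -- `p_{ij} = M_{ij}(r_{ij} − (qᵢ, ξᵢ))` with `M_{ij}(x₁,x₂) = (aᵢⱼx₁ − bᵢⱼx₂, bᵢⱼx₁)`
    (p : Fin n → Fin n → ℝ → EuclideanSpace ℝ (Fin 2) × EuclideanSpace ℝ (Fin 2))
    (hp : ∀ i j t, p i j t
      = (a i j • (rq i j t - q i t) - b i j • (rξ i j t - ξ i t),
         b i j • (rq i j t - q i t)))
    -- `r̄_{ij} = (r^q_{ij} − q_r, r^ξ_{ij})`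
    (rbar : Fin n → Fin n → ℝ → EuclideanSpace ℝ (Fin 2) × EuclideanSpace ℝ (Fin 2))
    (hrbar : ∀ i j t, rbar i j t = (rq i j t - qr, rξ i j t))
    -- scattering transmission relations along each edge
    (htrans1 : ∀ i j, G.Adj i j → ∀ t : ℝ,
      (1 / Real.sqrt (2 * σ)) • (p j i t + σ • rbar j i t)
        = (1 / Real.sqrt (2 * σ)) • (-p i j (t - T) + σ • rbar i j (t - T)))
    (htrans2 : ∀ i j, G.Adj i j → ∀ t : ℝ,
      (1 / Real.sqrt (2 * σ)) • (-p i j t - σ • rbar i j t)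
        = (1 / Real.sqrt (2 * σ)) • (p j i (t - T) - σ • rbar j i (t - T)))
    -- an orientation of the edge set: each undirected edge of `G` appears exactly once
    (E : Finset (Fin n × Fin n))
    (hE : ∀ i j, G.Adj i j ↔ ((i, j) ∈ E ∨ (j, i) ∈ E))
    (hE1 : ∀ e ∈ E, (e.2, e.1) ∉ E)
    -- the total storage function
    (S : ℝ → ℝ)
    (hS : ∀ t, S t
      = (1 / (m : ℝ)) * ∑ i, (1 / 2 * ‖q i t - qr‖ ^ 2 + 1 / 2 * ‖ξ i t‖ ^ 2)
        + (1 / (m : ℝ)) * ∑ e ∈ E,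
            (1 / 2 * (∫ τ in (t - T)..t,
                (‖((1 / Real.sqrt (2 * σ)) • (-p e.1 e.2 τ + σ • rbar e.1 e.2 τ)).1‖ ^ 2
                  + ‖((1 / Real.sqrt (2 * σ)) • (-p e.1 e.2 τ + σ • rbar e.1 e.2 τ)).2‖ ^ 2))
              + 1 / 2 * (∫ τ in (t - T)..t,
                (‖((1 / Real.sqrt (2 * σ)) • (p e.2 e.1 τ - σ • rbar e.2 e.1 τ)).1‖ ^ 2
                  + ‖((1 / Real.sqrt (2 * σ)) • (p e.2 e.1 τ - σ • rbar e.2 e.1 τ)).2‖ ^ 2))))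
    -- average position of accessible robots and its shifted version
    (z zbar : ℝ → EuclideanSpace ℝ (Fin 2))
    (hzdef : ∀ t, z t = (1 / (m : ℝ)) • ∑ i ∈ Vh, q i t)
    (hz : ∀ t, zbar t = z t - qr)
    -- input strict passivity of the human decision process
    (ε : ℝ) (hε : 0 < ε) (Sh : ℝ → ℝ)
    (hSh_nonneg : ∀ t, 0 ≤ Sh t) (hSh_diff : Differentiable ℝ Sh)
    (hSh : ∀ t, deriv Sh t ≤ ⟪qr - z t, uh t⟫ - ε * ‖qr - z t‖ ^ 2)
    (U : ℝ → ℝ) (hU : ∀ t, U t = S t + Sh t) :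
    Antitone U ∧
    ∀ t, 0 ≤ t →
      S t ≤ S 0 + Sh 0 ∧
      (∀ i, ‖q i t - qr‖ ≤ Real.sqrt (2 * m * (S 0 + Sh 0)) ∧
            ‖ξ i t‖ ≤ Real.sqrt (2 * m * (S 0 + Sh 0))) ∧
      (∫ τ in (0:ℝ)..t,
          ((1 / (m : ℝ)) * ∑ i, ∑ j, a i j * ‖q i τ - rq i j τ‖ ^ 2
            + ε * ‖zbar τ‖ ^ 2)) ≤ S 0 + Sh 0 := by
  subst hm
  have hS' : S = totalStorage #Vh T σ qr q ξ p rbar E := funext hS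
  have hSderiv := hasDerivAt_totalStorage a b hE1
    (fun i j h₁ h₂ => hoff i j fun h => ((hE i j).1 h).elim h₁ h₂) T hσ qr hVh δ hδ uh hrq hrξ
    hξdyn hqdyn hp hrbar (fun e he => htrans1 e.1 e.2 ((hE _ _).2 (.inl he)))
    (fun e he => htrans2 e.1 e.2 ((hE _ _).2 (.inl he)))
  simp only [← hzdef, ← hz, ← hS'] at hSderiv
  have hqc : ∀ i, Continuous (q i) := fun i =>
    continuous_iff_continuousAt.2 fun t => (hqdyn i t).continuousAt
  have hzbar : Continuous zbar := by
    rw [show zbar = _ from funext hz, show z = _ from funext hzdef]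
    fun_prop
  rw [show U = _ from funext hU]
  obtain ⟨hU_anti, hU_int⟩ := antitone_and_integral_le_of_feedback
    hSderiv hSh_diff
    (fun t => by simpa only [← neg_sub (z t) qr, ← hz] using hSh t) (by fun_prop) hzbar
    (fun τ => mul_nonneg (by positivity) (sum_nonneg fun i _ => sum_nonneg fun j _ =>
      mul_nonneg (ha i j) (sq_nonneg _))) hε.le
  have hS_le : ∀ t, 0 ≤ t → S t ≤ S 0 + Sh 0 := fun t ht => by
    linarith [hU_anti ht, hSh_nonneg t]
  have hnorm : ∀ t, 0 ≤ t → ∀ i, ‖q i t - qr‖ ^ 2 + ‖ξ i t‖ ^ 2 ≤ 2 * #Vh * (S 0 + Sh 0) :=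
    fun t ht i => (hS' ▸ norm_sq_add_norm_sq_le_totalStorage hVh.card_pos hT.le σ qr q ξ p rbar E
      i t).trans (by gcongr; exact hS_le t ht)
  refine ⟨hU_anti, fun t ht => ⟨hS_le t ht, fun i => ⟨?_, ?_⟩, ?_⟩⟩
  · exact Real.le_sqrt_of_sq_le (by linarith [hnorm t ht i, sq_nonneg ‖ξ i t‖])
  · exact Real.le_sqrt_of_sq_le (by linarith [hnorm t ht i, sq_nonneg ‖q i t - qr‖])
  · linarith [hU_int t ht, hSh_nonneg t, hS' ▸ totalStorage_nonneg #Vh hT.le σ qr q ξ p rbar E t]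

/-- Under the hypotheses of the delayed-network passivity result, if the
human decision process is input strictly passive (`S_h' ≤ ⟨q_r − z, u_h⟩ − ε‖q_r − z‖²`
with `S_h ≥ 0`), then `U = S + S_h` is nonincreasing; in particular, for all `t ≥ 0`:
`S(t) ≤ S(0) + S_h(0)`, every `‖qᵢ(t) − q_r‖` and `‖ξᵢ(t)‖` is bounded by
`√(2m(S(0)+S_h(0)))`, and
`∫₀ᵗ [(1/m)ΣᵢΣⱼ aᵢⱼ‖qᵢ − r^q_{ij}‖² + ε‖z̄‖²] ≤ S(0) + S_h(0)`. -/
theorem stmt_8 {n : ℕ} (G : SimpleGraph (Fin n))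
    (a b : Fin n → Fin n → ℝ)
    (hsym_a : ∀ i j, a i j = a j i) (hsym_b : ∀ i j, b i j = b j i)
    (ha : ∀ i j, 0 ≤ a i j)
    (hadj : ∀ i j, G.Adj i j ↔ 0 < a i j)
    (hoff : ∀ i j, ¬G.Adj i j → a i j = 0 ∧ b i j = 0)
    (T σ : ℝ) (hT : 0 < T) (hσ : 0 < σ)
    (qr : EuclideanSpace ℝ (Fin 2))
    (Vh : Finset (Fin n)) (hVh : Vh.Nonempty) (m : ℕ) (hm : m = Vh.card)
    (δ : Fin n → ℝ) (hδ : ∀ i, δ i = if i ∈ Vh then 1 else 0)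
    (uh : ℝ → EuclideanSpace ℝ (Fin 2)) (huh : Continuous uh)
    (rq rξ : Fin n → Fin n → ℝ → EuclideanSpace ℝ (Fin 2))
    (hrq : ∀ i j, Continuous (rq i j)) (hrξ : ∀ i j, Continuous (rξ i j))
    (q ξ : Fin n → ℝ → EuclideanSpace ℝ (Fin 2))
    -- the delayed cooperative dynamics
    (hξdyn : ∀ i t, HasDerivAt (ξ i) (∑ j, b i j • (rq i j t - q i t)) t)
    (hqdyn : ∀ i t, HasDerivAt (q i)
      (∑ j, a i j • (rq i j t - q i t) - ∑ j, b i j • (rξ i j t - ξ i t) + δ i • uh t) t)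
    -- `p_{ij} = M_{ij}(r_{ij} − (qᵢ, ξᵢ))` with `M_{ij}(x₁,x₂) = (aᵢⱼx₁ − bᵢⱼx₂, bᵢⱼx₁)`
    (p : Fin n → Fin n → ℝ → EuclideanSpace ℝ (Fin 2) × EuclideanSpace ℝ (Fin 2))
    (hp : ∀ i j t, p i j t
      = (a i j • (rq i j t - q i t) - b i j • (rξ i j t - ξ i t),
         b i j • (rq i j t - q i t)))
    -- `r̄_{ij} = (r^q_{ij} − q_r, r^ξ_{ij})`
    (rbar : Fin n → Fin n → ℝ → EuclideanSpace ℝ (Fin 2) × EuclideanSpace ℝ (Fin 2))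
    (hrbar : ∀ i j t, rbar i j t = (rq i j t - qr, rξ i j t))
    -- scattering transmission relations along each edge
    (htrans1 : ∀ i j, G.Adj i j → ∀ t : ℝ,
      (1 / Real.sqrt (2 * σ)) • (p j i t + σ • rbar j i t)
        = (1 / Real.sqrt (2 * σ)) • (-p i j (t - T) + σ • rbar i j (t - T)))
    (htrans2 : ∀ i j, G.Adj i j → ∀ t : ℝ,
      (1 / Real.sqrt (2 * σ)) • (-p i j t - σ • rbar i j t)
        = (1 / Real.sqrt (2 * σ)) • (p j i (t - T) - σ • rbar j i (t - T)))
    -- an orientation of the edge set: each undirected edge of `G` appears exactly once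
    (E : Finset (Fin n × Fin n))
    (hE : ∀ i j, G.Adj i j ↔ ((i, j) ∈ E ∨ (j, i) ∈ E))
    (hE1 : ∀ e ∈ E, (e.2, e.1) ∉ E)
    -- the total storage function
    (S : ℝ → ℝ)
    (hS : ∀ t, S t
      = (1 / (m : ℝ)) * ∑ i, (1 / 2 * ‖q i t - qr‖ ^ 2 + 1 / 2 * ‖ξ i t‖ ^ 2)
        + (1 / (m : ℝ)) * ∑ e ∈ E,
            (1 / 2 * (∫ τ in (t - T)..t,
                (‖((1 / Real.sqrt (2 * σ)) • (-p e.1 e.2 τ + σ • rbar e.1 e.2 τ)).1‖ ^ 2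
                  + ‖((1 / Real.sqrt (2 * σ)) • (-p e.1 e.2 τ + σ • rbar e.1 e.2 τ)).2‖ ^ 2))
              + 1 / 2 * (∫ τ in (t - T)..t,
                (‖((1 / Real.sqrt (2 * σ)) • (p e.2 e.1 τ - σ • rbar e.2 e.1 τ)).1‖ ^ 2
                  + ‖((1 / Real.sqrt (2 * σ)) • (p e.2 e.1 τ - σ • rbar e.2 e.1 τ)).2‖ ^ 2))))
    -- average position of accessible robots and its shifted version
    (z zbar : ℝ → EuclideanSpace ℝ (Fin 2))
    (hzdef : ∀ t, z t = (1 / (m : ℝ)) • ∑ i ∈ Vh, q i t)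
    (hz : ∀ t, zbar t = z t - qr)
    -- input strict passivity of the human decision process
    (ε : ℝ) (hε : 0 < ε) (Sh : ℝ → ℝ)
    (hSh_nonneg : ∀ t, 0 ≤ Sh t) (hSh_diff : Differentiable ℝ Sh)
    (hSh : ∀ t, deriv Sh t ≤ ⟪qr - z t, uh t⟫ - ε * ‖qr - z t‖ ^ 2)
    (U : ℝ → ℝ) (hU : ∀ t, U t = S t + Sh t) :
    Antitone U ∧
    ∀ t, 0 ≤ t →
      S t ≤ S 0 + Sh 0 ∧
      (∀ i, ‖q i t - qr‖ ≤ Real.sqrt (2 * m * (S 0 + Sh 0)) ∧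
            ‖ξ i t‖ ≤ Real.sqrt (2 * m * (S 0 + Sh 0))) ∧
      (∫ τ in (0:ℝ)..t,
          ((1 / (m : ℝ)) * ∑ i, ∑ j, a i j * ‖q i τ - rq i j τ‖ ^ 2
            + ε * ‖zbar τ‖ ^ 2)) ≤ S 0 + Sh 0 :=
  stmt_8_general G a b ha hoff T σ hT hσ qr Vh hVh m hm δ hδ uh rq rξ hrq hrξ q ξ hξdyn hqdyn p hp
    rbar hrbar htrans1 htrans2 E hE hE1 S hS z zbar hzdef hz ε hε Sh hSh_nonneg hSh_diff hSh U hU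
end

section
/- Consider an edge (i,j) of the communication graph with common gains a ≥ 0, b, parameters σ > 0, T > 0, differentiable q_i, ξ_i, q_j, ξ_j : ℝ → ℝ² and continuous r^q_{ij}, r^ξ_{ij}, r^q_{ji}, r^ξ_{ji} : ℝ → ℝ² satisfying the scattering transmission relations s⁻_{ij}(t) = s⁻_{ji}(t−T) and s⁺_{ji}(t) = s⁺_{ij}(t−T) (with p_{ij} = M_{ij}(r_{ij} − (q_i, ξ_i)), M_{ij}(x₁,x₂) = (a x₁ − b x₂, b x₁), and analogously for p_{ji}), and the controller dynamics ξ̇_i(t) = Σ_{k∈N_i} b_{ik}(r^q_{ik}(t) − q_i(t)) over the finite neighbor set N_i of i. Assume that r^q_{ik}(t) − q_i(t) → 0 as t → ∞ for every k ∈ N_i and r^q_{ji}(t) − q_j(t) → 0 as t → ∞. Then the defect signals e_{ij}(t) = −(1/σ)[(r^q_{ij}(t)−q_i(t)) + (r^q_{ji}(t−T)−q_j(t−T))] and e_{ji}(t) = −(1/σ)[(r^q_{ji}(t)−q_j(t)) + (r^q_{ij}(t−T)−q_i(t−T))] tend to 0, and moreover r^q_{ij}(t) + r^q_{ij}(t−2T)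 − 2·r^q_{ji}(t−T) → 0 as t → ∞. -/
/-!
Adding, resp. subtracting, the two transmission relations over a round trip eliminates the
signals of robot `j` except at `t - T`:
`σ (rᵢⱼ(t) + rᵢⱼ(t - 2T) - 2 rⱼᵢ(t - T)) = pᵢⱼ(t - 2T) - pᵢⱼ(t)` and
`σ (rᵢⱼ(t - 2T) - rᵢⱼ(t)) = pᵢⱼ(t) + pᵢⱼ(t - 2T) + 2 pⱼᵢ(t - T)`.
The `ξ`-component of the second shows `r^ξᵢⱼ(t - 2T) - r^ξᵢⱼ(t) → 0`, and
`ξᵢ(t - 2T) - ξᵢ(t) → 0` by the mean value theorem since `ξ̇ᵢ → 0`. Hence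
`p^qᵢⱼ(t - 2T) - p^qᵢⱼ(t) → 0`, and the `q`-component of the first identity gives the claim.
The defect signals are sums of vanishing terms.
-/

open Filter Topology

lemma tendsto_sub_const_atTop (c : ℝ) : Tendsto (fun t : ℝ => t - c) atTop atTop := by
  simpa only [id, sub_eq_add_neg] using tendsto_atTop_add_const_right atTop (-c) tendsto_id

lemma Filter.Tendsto.comp_sub_const {E : Type*} [TopologicalSpace E] {f : ℝ → E} {x : E}
    (hf : Tendsto f atTop (𝓝 x)) (c : ℝ) : Tendsto (fun t => f (t - c)) atTop (𝓝 x) :=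
  hf.comp (tendsto_sub_const_atTop c)

lemma tendsto_comp_sub_const_sub_of_hasDerivAt {E : Type*} [NormedAddCommGroup E]
    [NormedSpace ℝ E] {f g : ℝ → E} (hf : ∀ t, HasDerivAt f (g t) t)
    (hg : Tendsto g atTop (𝓝 0)) (c : ℝ) :
    Tendsto (fun t => f (t - c) - f t) atTop (𝓝 0) := by
  rw [Metric.tendsto_atTop] at hg ⊢
  intro ε hε
  obtain ⟨M, hM⟩ := hg (ε / (|c| + 1)) (by positivity)
  refine ⟨M + |c|, fun t ht => ?_⟩
  have hmvt := (convex_Ici M).norm_image_sub_le_of_norm_hasDerivWithin_le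
    (fun x _ => (hf x).hasDerivWithinAt) (fun x hx => by simpa only [dist_zero_right] using (hM x hx).le)
    (x := t) (y := t - c) (Set.mem_Ici.mpr (by linarith [abs_nonneg c]))
    (Set.mem_Ici.mpr (by linarith [le_abs_self c]))
  rw [dist_zero_right]
  calc ‖f (t - c) - f t‖ ≤ ε / (|c| + 1) * |c| := by simpa using hmvt
    _ < ε := by
      rw [div_mul_eq_mul_div, div_lt_iff₀ (by positivity)]
      linarith

section Scattering

variable {E : Type*} [AddCommGroup E] [Module ℝ E] {σ T : ℝ} {p p' r r' : ℝ → E}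

/- `hm` and `hp` are the transmission relations `s⁻ᵢⱼ(t) = s⁻ⱼᵢ(t - T)` and
`s⁺ⱼᵢ(t) = s⁺ᵢⱼ(t - T)` multiplied by `√(2σ)`. -/

lemma smul_round_trip_add (hm : ∀ t, -p t - σ • r t = p' (t - T) - σ • r' (t - T))
    (hp : ∀ t, p' t + σ • r' t = -p (t - T) + σ • r (t - T)) (t : ℝ) :
    σ • (r t + r (t - 2 * T) - (2 : ℝ) • r' (t - T)) = p (t - 2 * T) - p t := by
  have h := hp (t - T)
  rw [show t - T - T = t - 2 * T by ring] at h
  linear_combination (norm := module) -hm t - h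

lemma smul_round_trip_sub (hm : ∀ t, -p t - σ • r t = p' (t - T) - σ • r' (t - T))
    (hp : ∀ t, p' t + σ • r' t = -p (t - T) + σ • r (t - T)) (t : ℝ) :
    σ • (r (t - 2 * T) - r t) = p t + p (t - 2 * T) + (2 : ℝ) • p' (t - T) := by
  have h := hp (t - T)
  rw [show t - T - T = t - 2 * T by ring] at h
  linear_combination (norm := module) hm t - h

end Scattering

theorem stmt_12_general {ι : Type*} (N : Finset ι) (j : ι) (hj : j ∈ N)
    (a b : ℝ) (bgain : ι → ℝ)
    (σ T : ℝ) (hσ : 0 < σ)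
    (qi ξi qj ξj : ℝ → EuclideanSpace ℝ (Fin 2))
    -- signals received by robot `i` from its neighbors (`r^q_{ij} = rq' j`, `r^ξ_{ij} = rξ' j`)
    (rq' rξ' : ι → ℝ → EuclideanSpace ℝ (Fin 2))
    -- signals received by robot `j` from robot `i`
    (rqji rξji : ℝ → EuclideanSpace ℝ (Fin 2))
    -- `p_{ij} = M_{ij}(r_{ij} − (qᵢ, ξᵢ))`, `M_{ij}(x₁,x₂) = (a x₁ − b x₂, b x₁)`, and likewise `p_{ji}`
    (pij pji : ℝ → EuclideanSpace ℝ (Fin 2) × EuclideanSpace ℝ (Fin 2))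
    (hpij : ∀ t, pij t
      = (a • (rq' j t - qi t) - b • (rξ' j t - ξi t), b • (rq' j t - qi t)))
    (hpji : ∀ t, pji t
      = (a • (rqji t - qj t) - b • (rξji t - ξj t), b • (rqji t - qj t)))
    -- scattering transmission relations: `s⁻_{ij}(t) = s⁻_{ji}(t−T)`, `s⁺_{ji}(t) = s⁺_{ij}(t−T)`
    (htransm : ∀ t : ℝ,
      (1 / Real.sqrt (2 * σ)) • (-pij t - σ • ((rq' j t, rξ' j t) :
          EuclideanSpace ℝ (Fin 2) × EuclideanSpace ℝ (Fin 2)))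
        = (1 / Real.sqrt (2 * σ)) • (pji (t - T) - σ • ((rqji (t - T), rξji (t - T)) :
            EuclideanSpace ℝ (Fin 2) × EuclideanSpace ℝ (Fin 2))))
    (htransp : ∀ t : ℝ,
      (1 / Real.sqrt (2 * σ)) • (pji t + σ • ((rqji t, rξji t) :
          EuclideanSpace ℝ (Fin 2) × EuclideanSpace ℝ (Fin 2)))
        = (1 / Real.sqrt (2 * σ)) • (-pij (t - T) + σ • ((rq' j (t - T), rξ' j (t - T)) :
            EuclideanSpace ℝ (Fin 2) × EuclideanSpace ℝ (Fin 2))))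
    -- controller dynamics of robot `i`
    (hξdyn : ∀ t, HasDerivAt ξi (∑ k ∈ N, bgain k • (rq' k t - qi t)) t)
    -- convergence of the received positions
    (hconv : ∀ k ∈ N, Tendsto (fun t => rq' k t - qi t) atTop (nhds 0))
    (hconvj : Tendsto (fun t => rqji t - qj t) atTop (nhds 0))
    -- the defect signals
    (eij eji : ℝ → EuclideanSpace ℝ (Fin 2))
    (heij : ∀ t, eij t
      = -(1 / σ) • ((rq' j t - qi t) + (rqji (t - T) - qj (t - T))))
    (heji : ∀ t, eji t
      = -(1 / σ) • ((rqji t - qj t) + (rq' j (t - T) - qi (t - T)))) :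
    Tendsto eij atTop (nhds 0) ∧ Tendsto eji atTop (nhds 0) ∧
    Tendsto (fun t => rq' j t + rq' j (t - 2 * T) - (2 : ℝ) • rqji (t - T))
      atTop (nhds 0) := by
  have hu := hconv j hj
  refine ⟨?_, ?_, ?_⟩
  · rw [show eij = _ from funext heij]
    simpa using (hu.add (hconvj.comp_sub_const T)).const_smul (-(1 / σ))
  · rw [show eji = _ from funext heji]
    simpa using (hconvj.add (hu.comp_sub_const T)).const_smul (-(1 / σ))
  have hc : 1 / Real.sqrt (2 * σ) ≠ 0 := by positivity
  have hm := fun t => smul_right_injective _ hc (htransm t)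
  have hp := fun t => smul_right_injective _ hc (htransp t)
  have hξi : Tendsto (fun t => ξi (t - 2 * T) - ξi t) atTop (𝓝 0) := by
    refine tendsto_comp_sub_const_sub_of_hasDerivAt hξdyn ?_ (2 * T)
    simpa using tendsto_finsetSum N fun k hk => (hconv k hk).const_smul (bgain k)
  have hrξ : Tendsto (fun t => rξ' j (t - 2 * T) - rξ' j t) atTop (𝓝 0) := by
    rw [← tendsto_const_smul_iff₀ hσ.ne', smul_zero]
    have h := fun t => congrArg Prod.snd
      (smul_round_trip_sub (r := fun t => (rq' j t, rξ' j t))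
        (r' := fun t => (rqji t, rξji t)) hm hp t)
    simp only [Prod.snd_add, Prod.snd_sub, Prod.smul_snd, hpij, hpji] at h
    simp_rw [h]
    simpa using ((hu.const_smul b).add ((hu.comp_sub_const (2 * T)).const_smul b)).add
      (((hconvj.comp_sub_const T).const_smul b).const_smul (2 : ℝ))
  rw [← tendsto_const_smul_iff₀ hσ.ne', smul_zero]
  have h := fun t => congrArg Prod.fst
    (smul_round_trip_add (r := fun t => (rq' j t, rξ' j t))
      (r' := fun t => (rqji t, rξji t)) hm hp t)
  simp only [Prod.fst_add, Prod.fst_sub, Prod.smul_fst, hpij] at h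
  simp_rw [h]
  have hlim := ((((hu.comp_sub_const (2 * T)).sub hu).const_smul a).sub
    (hrξ.const_smul b)).add (hξi.const_smul b)
  simp only [sub_self, smul_zero, add_zero] at hlim
  exact hlim.congr fun t => by module

/-- On an edge `(i,j)` of the communication graph with scattering
transmission relations `s⁻_{ij}(t) = s⁻_{ji}(t−T)` and `s⁺_{ji}(t) = s⁺_{ij}(t−T)` and the
controller dynamics `ξ̇ᵢ = Σ_{k∈Nᵢ} b_{ik}(r^q_{ik} − qᵢ)`, if `r^q_{ik} − qᵢ → 0` for all
`k ∈ Nᵢ` and `r^q_{ji} − qⱼ → 0`, then the defect signals `e_{ij}, e_{ji}` tend to `0` and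
`r^q_{ij}(t) + r^q_{ij}(t−2T) − 2r^q_{ji}(t−T) → 0` as `t → ∞`. -/
theorem stmt_12 {ι : Type*} (N : Finset ι) (j : ι) (hj : j ∈ N)
    (a b : ℝ) (ha : 0 ≤ a) (bgain : ι → ℝ) (hbj : bgain j = b)
    (σ T : ℝ) (hσ : 0 < σ) (hT : 0 < T)
    (qi ξi qj ξj : ℝ → EuclideanSpace ℝ (Fin 2))
    (hqi : Differentiable ℝ qi) (hqj : Differentiable ℝ qj) (hξj : Differentiable ℝ ξj)
    -- signals received by robot `i` from its neighbors (`r^q_{ij} = rq' j`, `r^ξ_{ij} = rξ' j`)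
    (rq' rξ' : ι → ℝ → EuclideanSpace ℝ (Fin 2))
    (hrq' : ∀ k, Continuous (rq' k)) (hrξ' : ∀ k, Continuous (rξ' k))
    -- signals received by robot `j` from robot `i`
    (rqji rξji : ℝ → EuclideanSpace ℝ (Fin 2))
    (hrqji : Continuous rqji) (hrξji : Continuous rξji)
    -- `p_{ij} = M_{ij}(r_{ij} − (qᵢ, ξᵢ))`, `M_{ij}(x₁,x₂) = (a x₁ − b x₂, b x₁)`, and likewise `p_{ji}`
    (pij pji : ℝ → EuclideanSpace ℝ (Fin 2) × EuclideanSpace ℝ (Fin 2))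
    (hpij : ∀ t, pij t
      = (a • (rq' j t - qi t) - b • (rξ' j t - ξi t), b • (rq' j t - qi t)))
    (hpji : ∀ t, pji t
      = (a • (rqji t - qj t) - b • (rξji t - ξj t), b • (rqji t - qj t)))
    -- scattering transmission relations: `s⁻_{ij}(t) = s⁻_{ji}(t−T)`, `s⁺_{ji}(t) = s⁺_{ij}(t−T)`
    (htransm : ∀ t : ℝ,
      (1 / Real.sqrt (2 * σ)) • (-pij t - σ • ((rq' j t, rξ' j t) :
          EuclideanSpace ℝ (Fin 2) × EuclideanSpace ℝ (Fin 2)))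
        = (1 / Real.sqrt (2 * σ)) • (pji (t - T) - σ • ((rqji (t - T), rξji (t - T)) :
            EuclideanSpace ℝ (Fin 2) × EuclideanSpace ℝ (Fin 2))))
    (htransp : ∀ t : ℝ,
      (1 / Real.sqrt (2 * σ)) • (pji t + σ • ((rqji t, rξji t) :
          EuclideanSpace ℝ (Fin 2) × EuclideanSpace ℝ (Fin 2)))
        = (1 / Real.sqrt (2 * σ)) • (-pij (t - T) + σ • ((rq' j (t - T), rξ' j (t - T)) :
            EuclideanSpace ℝ (Fin 2) × EuclideanSpace ℝ (Fin 2))))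
    -- controller dynamics of robot `i`
    (hξdyn : ∀ t, HasDerivAt ξi (∑ k ∈ N, bgain k • (rq' k t - qi t)) t)
    -- convergence of the received positions
    (hconv : ∀ k ∈ N, Tendsto (fun t => rq' k t - qi t) atTop (nhds 0))
    (hconvj : Tendsto (fun t => rqji t - qj t) atTop (nhds 0))
    -- the defect signals
    (eij eji : ℝ → EuclideanSpace ℝ (Fin 2))
    (heij : ∀ t, eij t
      = -(1 / σ) • ((rq' j t - qi t) + (rqji (t - T) - qj (t - T))))
    (heji : ∀ t, eji t
      = -(1 / σ) • ((rqji t - qj t) + (rq' j (t - T) - qi (t - T)))) :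
    Tendsto eij atTop (nhds 0) ∧ Tendsto eji atTop (nhds 0) ∧
    Tendsto (fun t => rq' j t + rq' j (t - 2 * T) - (2 : ℝ) • rqji (t - T))
      atTop (nhds 0) :=
  stmt_12_general N j hj a b bgain σ T hσ qi ξi qj ξj rq' rξ' rqji rξji pij pji hpij hpji htransm
    htransp hξdyn hconv hconvj eij eji heij heji
end
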